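/- arXiv:2605.02591 — 3 statements merged into one kernel-verified Lean document; each statement's English description precedes it below -/
import Mathlib

section
/- If |α| ≤ 1, then BerLU is Lipschitz continuous with Lipschitz constant 1; more precisely, for all x, y ∈ ℝ, |BerLU(x) - BerLU(y)| ≤ |x - y|. -/
noncomputable def berlu (ε α x : ℝ) : ℝ :=
  if x < -ε then α * x
  else if x ≤ ε then (1 - α) / (4 * ε) * x ^ 2 + (1 + α) / 2 * x + (1 - α) * ε / 4
  else x

lemma berlu_key (ε α : ℝ) (hε : 0 < ε) (hα : |α| ≤ 1) :
    ∀ x y : ℝ, x ≤ y → |berlu ε α x - berlu ε α y| ≤ y - x := by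
  obtain ⟨ha1, ha2⟩ := abs_le.mp hα
  intro x y hxy
  have hεne : (4 * ε) ≠ 0 := by positivity
  set q := (1 - α) / (4 * ε) with hqdef
  have hq : q * (4 * ε) = 1 - α := div_mul_cancel₀ _ hεne
  have hq0 : 0 ≤ q := div_nonneg (by linarith) (by linarith)
  unfold berlu
  rw [abs_le]
  rcases lt_or_ge x (-ε) with hx1 | hx1
  · rcases lt_or_ge y (-ε) with hy1 | hy1
    · simp only [if_pos hx1, if_pos hy1]
      constructor <;> nlinarith
    · rcases le_or_gt y ε with hy2 | hy2
      · simp only [if_pos hx1, if_neg (not_lt.mpr hy1), if_pos hy2, ← hqdef]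
        have h1 : 0 ≤ q * ((3*ε - y) * (ε + y)) :=
          mul_nonneg hq0 (mul_nonneg (by linarith) (by linarith))
        have h2 : 0 ≤ (1 - α) * (-ε - x) := mul_nonneg (by linarith) (by linarith)
        have hqy : q * ((3*ε - y) * (ε + y)) * (4*ε) = (1 - α) * ((3*ε - y) * (ε + y)) := by
          rw [mul_right_comm, hq]
        constructor
        · refine le_of_mul_le_mul_right ?_ (show (0:ℝ) < 4*ε by linarith)
          nlinarith [mul_nonneg h1 (le_of_lt hε), mul_nonneg h2 (le_of_lt hε), hqy, sq_nonneg (y + ε), sq_nonneg (y - ε)]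
        · have h3 : 0 ≤ (y + ε) * ((1 - α)*y + (5 + 3*α)*ε) :=
            mul_nonneg (by linarith) (by nlinarith)
          have h4 : 0 ≤ ((1 + α) * (-ε - x)) * ε :=
            mul_nonneg (mul_nonneg (by linarith) (by linarith)) hε.le
          have hqy2 : q * y ^ 2 * (4*ε) = (1 - α) * y ^ 2 := by rw [mul_right_comm, hq]
          refine le_of_mul_le_mul_right ?_ (show (0:ℝ) < 4*ε by linarith)
          nlinarith [h3, h4, hqy2]
      · simp only [if_pos hx1, if_neg (show ¬ y < -ε by linarith), if_neg (not_le.mpr hy2)]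
        constructor <;> nlinarith
  · rcases le_or_gt x ε with hx2 | hx2
    · have hy1 : ¬ y < -ε := not_lt.mpr (le_trans hx1 hxy)
      rcases le_or_gt y ε with hy2 | hy2
      · simp only [if_neg (not_lt.mpr hx1), if_pos hx2, if_neg hy1, if_pos hy2, ← hqdef]
        constructor
        · nlinarith [mul_nonneg hq0 (mul_nonneg (sub_nonneg.mpr hxy) (by linarith : (0:ℝ) ≤ 2*ε + x + y)), mul_nonneg hq0 (mul_nonneg (sub_nonneg.mpr hxy) (by linarith : (0:ℝ) ≤ 2*ε - x - y))]
        · nlinarith [mul_nonneg hq0 (mul_nonneg (sub_nonneg.mpr hxy) (by linarith : (0:ℝ) ≤ 2*ε + x + y)), mul_nonneg hq0 (mul_nonneg (sub_nonneg.mpr hxy) (by linarith : (0:ℝ) ≤ 2*ε - x - y))]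
      · simp only [if_neg (not_lt.mpr hx1), if_pos hx2, if_neg hy1, if_neg (not_le.mpr hy2), ← hqdef]
        constructor
        · nlinarith [sq_nonneg (x - ε), sq_nonneg (x + ε), mul_nonneg hq0 (sq_nonneg (x + ε)), mul_nonneg hq0 (sq_nonneg (x - ε))]
        · nlinarith [sq_nonneg (x - ε), sq_nonneg (x + ε), mul_nonneg hq0 (sq_nonneg (x + ε)), mul_nonneg hq0 (sq_nonneg (x - ε))]
    · have hy2 : ¬ y ≤ ε := not_le.mpr (lt_of_lt_of_le hx2 hxy)
      have hy1 : ¬ y < -ε := not_lt.mpr (by linarith)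
      simp only [if_neg (not_lt.mpr hx1), if_neg (not_le.mpr hx2), if_neg hy1, if_neg hy2]
      constructor <;> linarith [abs_sub_abs_le_abs_sub x y]

theorem berlu_lipschitz (ε α : ℝ) (hε : 0 < ε) (hα : |α| ≤ 1) :
    LipschitzWith 1 (berlu ε α) ∧ ∀ x y : ℝ, |berlu ε α x - berlu ε α y| ≤ |x - y| := by
  have key : ∀ x y : ℝ, |berlu ε α x - berlu ε α y| ≤ |x - y| := by
    intro x y
    rcases le_total x y with h | h
    · calc |berlu ε α x - berlu ε α y| ≤ y - x := berlu_key ε α hε hα x y h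
        _ ≤ |x - y| := by rw [abs_sub_comm]; exact le_abs_self _
    · rw [abs_sub_comm]
      calc |berlu ε α y - berlu ε α x| ≤ x - y := berlu_key ε α hε hα y x h
        _ ≤ |x - y| := le_abs_self _
  refine ⟨LipschitzWith.of_dist_le_mul fun x y => ?_, key⟩
  rw [Real.dist_eq, Real.dist_eq, NNReal.coe_one, one_mul]
  exact key x y
end

section
/- If 0 ≤ α ≤ 1, then BerLU is convex on ℝ. -/
theorem berlu_convex (ε α : ℝ) (hε : 0 < ε) (h0 : 0 ≤ α) (h1 : α ≤ 1) :
    ConvexOn ℝ Set.univ (berlu ε α) := by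
  have hε' : ε ≠ 0 := hε.ne'
  set q : ℝ → ℝ := fun x => (1 - α) / (4 * ε) * x ^ 2 + (1 + α) / 2 * x + (1 - α) * ε / 4
    with hqdef
  set L : ℝ → ℝ := fun x => (1 - α) / (2 * ε) * x + (1 + α) / 2 with hLdef
  set D : ℝ → ℝ := fun x => max α (min 1 (L x)) with hDdef
  have hLmono : Monotone L := by
    intro x y hxy
    have hc : 0 ≤ (1 - α) / (2 * ε) := div_nonneg (by linarith) (by linarith)
    simp only [hLdef]
    have := mul_le_mul_of_nonneg_left hxy hc
    linarith
  have hLne : L (-ε) = α := by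
    simp only [hLdef]; field_simp; ring
  have hLe : L ε = 1 := by
    simp only [hLdef]; field_simp; ring
  have hq : ∀ x, HasDerivAt q (L x) x := by
    intro x
    have h := (((hasDerivAt_pow 2 x).const_mul ((1 - α) / (4 * ε))).add
      ((hasDerivAt_id x).const_mul ((1 + α) / 2))).add_const ((1 - α) * ε / 4)
    convert h using 1
    · rfl
    · rfl
    · rfl
    simp only [hLdef]
    field_simp
    ring
  -- values at junctions
  have hqne : q (-ε) = α * (-ε) := by
    simp only [hqdef]; field_simp; ring
  have hqe : q ε = ε := by
    simp only [hqdef]; field_simp; ring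
  have hb_left : ∀ y, y ≤ -ε → berlu ε α y = α * y := by
    intro y hy
    rcases lt_or_eq_of_le hy with h | h
    · simp [berlu, h]
    · subst h
      have h1' : ¬ (-ε < -ε) := lt_irrefl _
      have h2' : (-ε : ℝ) ≤ ε := by linarith
      simp only [berlu, if_neg h1', if_pos h2']
      exact hqne
  have hb_mid : ∀ y, -ε ≤ y → y ≤ ε → berlu ε α y = q y := by
    intro y hy1 hy2
    have : ¬ (y < -ε) := not_lt.mpr hy1
    simp [berlu, this, hy2, hqdef]
  have hb_right : ∀ y, ε ≤ y → berlu ε α y = y := by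
    intro y hy
    rcases lt_or_eq_of_le hy with h | h
    · have h1' : ¬ (y < -ε) := by push_neg; linarith
      have h2' : ¬ (y ≤ ε) := not_le.mpr h
      simp [berlu, h1', h2']
    · rw [← h]
      rw [hb_mid ε (by linarith) le_rfl, hqe]
  have key : ∀ x, HasDerivAt (berlu ε α) (D x) x := by
    intro x
    rcases lt_trichotomy x (-ε) with hx | hx | hx
    · -- x < -ε : berlu = α * y near x, derivative α
      have hd : HasDerivAt (berlu ε α) α x := by
        have : HasDerivAt (fun y : ℝ => α * y) α x := by
          simpa using (hasDerivAt_id x).const_mul α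
        refine this.congr_of_eventuallyEq ?_
        filter_upwards [Iio_mem_nhds hx] with y hy
        exact hb_left y hy.le
      have : D x = α := by
        have hLx : L x ≤ α := by rw [← hLne]; exact hLmono hx.le
        simp only [hDdef]
        rw [min_eq_right (hLx.trans h1), max_eq_left hLx]
      rwa [this]
    · -- x = -ε
      subst hx
      have hleft : HasDerivWithinAt (berlu ε α) α (Set.Iic (-ε)) (-ε) := by
        have : HasDerivAt (fun y : ℝ => α * y) α (-ε) := by
          simpa using (hasDerivAt_id (-ε : ℝ)).const_mul α
        exact this.hasDerivWithinAt.congr (fun y hy => hb_left y hy)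
          (hb_left _ le_rfl)
      have hright : HasDerivWithinAt (berlu ε α) α (Set.Ici (-ε)) (-ε) := by
        have hqd : HasDerivWithinAt q α (Set.Ici (-ε)) (-ε) := by
          have := (hq (-ε)).hasDerivWithinAt (s := Set.Ici (-ε))
          rwa [hLne] at this
        refine hqd.congr_of_eventuallyEq ?_ (hb_mid _ le_rfl (by linarith))
        have hmem : Set.Iio ε ∈ nhdsWithin (-ε : ℝ) (Set.Ici (-ε)) :=
            nhdsWithin_le_nhds (Iio_mem_nhds (by linarith))
        filter_upwards [hmem, self_mem_nhdsWithin] with y hy1 hy2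
        exact hb_mid y hy2 hy1.le
      have hd : HasDerivAt (berlu ε α) α (-ε) := by
        have := hleft.union hright
        rwa [Set.Iic_union_Ici, hasDerivWithinAt_univ] at this
      have : D (-ε) = α := by
        simp only [hDdef, hLne]
        rw [min_eq_right h1, max_self]
      rwa [this]
    · rcases lt_trichotomy x ε with hx2 | hx2 | hx2
      · -- -ε < x < ε
        have hd : HasDerivAt (berlu ε α) (L x) x := by
          refine (hq x).congr_of_eventuallyEq ?_
          filter_upwards [Ioo_mem_nhds hx hx2] with y hy
          exact hb_mid y hy.1.le hy.2.le
        have hDx : D x = L x := by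
          have h1' : α ≤ L x := by rw [← hLne]; exact hLmono hx.le
          have h2' : L x ≤ 1 := by rw [← hLe]; exact hLmono hx2.le
          simp only [hDdef]
          rw [min_eq_right h2', max_eq_right h1']
        rwa [hDx]
      · -- x = ε
        rw [hx2]
        have hleft : HasDerivWithinAt (berlu ε α) 1 (Set.Iic ε) ε := by
          have hqd : HasDerivWithinAt q 1 (Set.Iic ε) ε := by
            have := (hq ε).hasDerivWithinAt (s := Set.Iic ε)
            rwa [hLe] at this
          refine hqd.congr_of_eventuallyEq ?_ (hb_mid _ (by linarith) le_rfl)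
          have hmem : Set.Ioi (-ε) ∈ nhdsWithin (ε : ℝ) (Set.Iic ε) :=
            nhdsWithin_le_nhds (Ioi_mem_nhds (by linarith))
          filter_upwards [hmem, self_mem_nhdsWithin] with y hy1 hy2
          exact hb_mid y hy1.le hy2
        have hright : HasDerivWithinAt (berlu ε α) 1 (Set.Ici ε) ε := by
          exact (hasDerivAt_id ε).hasDerivWithinAt.congr
            (fun y hy => hb_right y hy) (hb_right _ le_rfl)
        have hd : HasDerivAt (berlu ε α) 1 ε := by
          have := hleft.union hright
          rwa [Set.Iic_union_Ici, hasDerivWithinAt_univ] at this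
        have : D ε = 1 := by
          simp only [hDdef, hLe]
          rw [min_self, max_eq_right h1]
        rwa [this]
      · -- x > ε
        have hd : HasDerivAt (berlu ε α) 1 x := by
          refine (hasDerivAt_id x).congr_of_eventuallyEq ?_
          filter_upwards [Ioi_mem_nhds hx2] with y hy
          exact hb_right y hy.le
        have : D x = 1 := by
          have h1' : 1 ≤ L x := by rw [← hLe]; exact hLmono hx2.le
          simp only [hDdef]
          rw [min_eq_left h1', max_eq_right h1]
        rwa [this]
  have hdiff : Differentiable ℝ (berlu ε α) := fun x => (key x).differentiableAt
  have hderiv : deriv (berlu ε α) = D := funext fun x => (key x).deriv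
  have hDmono : Monotone D := fun x y hxy =>
    max_le_max le_rfl (min_le_min le_rfl (hLmono hxy))
  have := Monotone.convexOn_univ_of_deriv hdiff (hderiv ▸ hDmono)
  exact this
end

section
/- BerLU uniformly approximates Leaky ReLU with error at most (1-α)ε/4 when 0 ≤ α ≤ 1: for all x ∈ ℝ, |BerLU(x) - max(x, αx)| ≤ (1-α)ε/4. -/
theorem berlu_approx_leakyRelu (ε α : ℝ) (hε : 0 < ε) (h0 : 0 ≤ α) (h1 : α ≤ 1) :
    ∀ x : ℝ, |berlu ε α x - max x (α * x)| ≤ (1 - α) * ε / 4 := by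
  intro x
  unfold berlu
  have htn : 0 ≤ (1 - α) / (4 * ε) := div_nonneg (by linarith) (by positivity)
  have hte : (1 - α) / (4 * ε) * ε = (1 - α) / 4 := by
    field_simp
  split_ifs with h1' h2'
  · have hx : x ≤ 0 := by nlinarith
    rw [max_eq_right (by nlinarith), abs_le]
    constructor <;> nlinarith
  · rcases le_or_gt x 0 with hx | hx
    · have hxe : -ε ≤ x := by linarith
      have key : (1 - α) / (4 * ε) * x ^ 2 ≤ -((1 - α) / 4) * x := by
        calc (1 - α) / (4 * ε) * x ^ 2 ≤ (1 - α) / (4 * ε) * (-ε * x) :=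
              mul_le_mul_of_nonneg_left (by nlinarith) htn
          _ = -((1 - α) / 4) * x := by rw [show (-ε * x : ℝ) = -(ε * x) by ring,
              mul_neg, ← mul_assoc, hte]; ring
      rw [max_eq_right (by nlinarith), abs_le]
      constructor
      · nlinarith [mul_nonneg htn (sq_nonneg (x + ε)), sq_nonneg (x + ε)]
      · nlinarith [key, mul_nonneg (sub_nonneg.mpr h1) (neg_nonneg.mpr hx)]
    · have key : (1 - α) / (4 * ε) * x ^ 2 ≤ (1 - α) / 4 * x := by
        calc (1 - α) / (4 * ε) * x ^ 2 ≤ (1 - α) / (4 * ε) * (ε * x) :=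
              mul_le_mul_of_nonneg_left (by nlinarith) htn
          _ = (1 - α) / 4 * x := by rw [← mul_assoc, hte]
      rw [max_eq_left (by nlinarith), abs_le]
      constructor
      · nlinarith [mul_nonneg htn (sq_nonneg (x - ε)), sq_nonneg (x - ε)]
      · nlinarith [key, mul_nonneg (sub_nonneg.mpr h1) hx.le]
  · rw [max_eq_left (by nlinarith), abs_le]
    constructor <;> nlinarith
end
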